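/- arXiv:2302.14150 — 7 statements merged into one kernel-verified Lean document; each statement's English description precedes it below -/
import Mathlib

section
/- Let X_1,...,X_n be Bernoulli random variables with P(X_i = 1) = p_i, and let X̃_1,...,X̃_n be mutually independent Bernoulli random variables with P(X̃_i = 1) = p_i. Set Z = Σ_{i=1}^n X_i and Z̃ = Σ_{i=1}^n X̃_i. Then P(Z > 0) ≤ (e/(e-1)) · P(Z̃ > 0). -/
open MeasureTheory ProbabilityTheory

lemma analytic_key (s : ℝ) (hs : 0 ≤ s) :
    min 1 s ≤ Real.exp 1 / (Real.exp 1 - 1) * (1 - Real.exp (-s)) := by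
  set E := Real.exp 1 with hEdef
  have hE : 1 < E := by have := Real.exp_one_gt_d9; linarith
  have hE0 : (0:ℝ) < E := by linarith
  have hE1 : (0:ℝ) < E - 1 := by linarith
  have hinv : Real.exp (-1) = E⁻¹ := by rw [Real.exp_neg]
  rcases le_total s 1 with hs1 | hs1
  · have hmin : min 1 s = s := min_eq_right hs1
    rw [hmin, div_mul_eq_mul_div, le_div_iff₀ hE1]
    have hconv := convexOn_exp.2 (Set.mem_univ (0:ℝ)) (Set.mem_univ (-1:ℝ))
      (by linarith : (0:ℝ) ≤ 1 - s) hs (by ring)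
    simp only [smul_eq_mul, mul_zero, zero_add, mul_neg, mul_one, Real.exp_zero] at hconv
    rw [hinv] at hconv
    have h2 : E * Real.exp (-s) ≤ E * (1 - s + s * E⁻¹) :=
      mul_le_mul_of_nonneg_left hconv hE0.le
    have h3 : E * (1 - s + s * E⁻¹) = E - E * s + s * (E * E⁻¹) := by ring
    have h4 : E * E⁻¹ = 1 := mul_inv_cancel₀ hE0.ne'
    rw [h3, h4] at h2
    nlinarith [h2]
  · have hmin : min 1 s = 1 := min_eq_left hs1
    rw [hmin, div_mul_eq_mul_div, le_div_iff₀ hE1]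
    have hmono : Real.exp (-s) ≤ Real.exp (-1) := Real.exp_le_exp.2 (by linarith)
    rw [hinv] at hmono
    have h2 : E * Real.exp (-s) ≤ E * E⁻¹ := mul_le_mul_of_nonneg_left hmono hE0.le
    rw [mul_inv_cancel₀ hE0.ne'] at h2
    nlinarith [h2]

/-- **Decoupling from above (Pinelis).** If `X i` are Bernoulli(`p i`) random variables
(no independence assumed) and `Xt i` are mutually independent Bernoulli(`p i`) random
variables, then `P(Z > 0) ≤ (e/(e-1)) · P(Z̃ > 0)` where `Z = ∑ X i`, `Z̃ = ∑ Xt i`. -/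
theorem stmt_0
    {Ω : Type*} [MeasureSpace Ω] [IsProbabilityMeasure (ℙ : Measure Ω)]
    (n : ℕ) (X Xt : Fin n → Ω → ℝ) (p : Fin n → ℝ)
    (hX01 : ∀ i ω, X i ω = 0 ∨ X i ω = 1)
    (hXt01 : ∀ i ω, Xt i ω = 0 ∨ Xt i ω = 1)
    (hXmeas : ∀ i, Measurable (X i))
    (hXtmeas : ∀ i, Measurable (Xt i))
    (hp : ∀ i, p i ∈ Set.Icc (0 : ℝ) 1)
    (hXp : ∀ i, (ℙ {ω | X i ω = 1}).toReal = p i)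
    (hXtp : ∀ i, (ℙ {ω | Xt i ω = 1}).toReal = p i)
    (hindep : iIndepFun (m := fun _ => Real.measurableSpace) Xt ℙ) :
    (ℙ {ω | 0 < ∑ i, X i ω}).toReal ≤
      Real.exp 1 / (Real.exp 1 - 1) * (ℙ {ω | 0 < ∑ i, Xt i ω}).toReal := by
  set s := ∑ i, p i with hsdef
  have hs0 : 0 ≤ s := Finset.sum_nonneg fun i _ => (hp i).1
  -- P(Z > 0) ≤ 1
  have h1 : (ℙ {ω | 0 < ∑ i, X i ω}).toReal ≤ 1 := by
    simpa using ENNReal.toReal_mono ENNReal.one_ne_top prob_le_one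
  -- union bound: P(Z > 0) ≤ s
  have hZ : (ℙ {ω | 0 < ∑ i, X i ω}).toReal ≤ s := by
    have hsub : {ω | 0 < ∑ i, X i ω} ⊆ ⋃ i, {ω | X i ω = 1} := by
      intro ω hω
      by_contra h
      simp only [Set.mem_iUnion, not_exists, Set.mem_setOf_eq] at h
      have hzero : ∀ i, X i ω = 0 := fun i => (hX01 i ω).resolve_right (h i)
      have : (0:ℝ) < ∑ i, X i ω := hω
      rw [Finset.sum_eq_zero (fun i _ => hzero i)] at this
      exact lt_irrefl _ this
    calc (ℙ {ω | 0 < ∑ i, X i ω}).toReal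
        ≤ (ℙ (⋃ i, {ω | X i ω = 1})).toReal :=
          ENNReal.toReal_mono (measure_ne_top _ _) (measure_mono hsub)
      _ ≤ (∑ i, ℙ {ω | X i ω = 1}).toReal := by
          apply ENNReal.toReal_mono
          · exact (ENNReal.sum_lt_top.2 fun i _ => measure_lt_top _ _).ne
          · exact measure_iUnion_fintype_le _ _
      _ = s := by
          rw [ENNReal.toReal_sum (fun i _ => measure_ne_top _ _)]
          exact Finset.sum_congr rfl fun i _ => hXp i
  -- independence: P(Z̃ > 0) = 1 - ∏ (1 - pᵢ)
  have hAmeas : ∀ i, MeasurableSet (Xt i ⁻¹' {0}) :=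
    fun i => (hXtmeas i) (measurableSet_singleton 0)
  have hAi : ∀ i, (ℙ (Xt i ⁻¹' {0})).toReal = 1 - p i := by
    intro i
    have hc : Xt i ⁻¹' {0} = {ω | Xt i ω = 1}ᶜ := by
      ext ω
      rcases hXt01 i ω with h | h <;> simp [h, Set.mem_preimage]
    have hm : MeasurableSet {ω | Xt i ω = 1} := (hXtmeas i) (measurableSet_singleton 1)
    rw [hc, measure_compl hm (measure_ne_top _ _), measure_univ,
      ENNReal.toReal_sub_of_le prob_le_one ENNReal.one_ne_top, ENNReal.toReal_one, hXtp i]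
  have hset : {ω | 0 < ∑ i, Xt i ω} = (⋂ i, Xt i ⁻¹' {0})ᶜ := by
    ext ω
    simp only [Set.mem_setOf_eq, Set.mem_compl_iff, Set.mem_iInter, Set.mem_preimage,
      Set.mem_singleton_iff]
    constructor
    · intro hω hall
      rw [Finset.sum_eq_zero (fun i _ => hall i)] at hω
      exact lt_irrefl _ hω
    · intro h
      push_neg at h
      obtain ⟨i, hi⟩ := h
      have h1' : Xt i ω = 1 := (hXt01 i ω).resolve_left hi
      refine Finset.sum_pos' (fun j _ => ?_) ⟨i, Finset.mem_univ i, by rw [h1']; norm_num⟩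
      rcases hXt01 j ω with h | h <;> simp [h]
  have hZt : (ℙ {ω | 0 < ∑ i, Xt i ω}).toReal = 1 - ∏ i, (1 - p i) := by
    rw [hset, measure_compl (MeasurableSet.iInter fun i => hAmeas i) (measure_ne_top _ _),
      measure_univ, ENNReal.toReal_sub_of_le prob_le_one ENNReal.one_ne_top,
      ENNReal.toReal_one,
      hindep.meas_iInter (fun i => ⟨{0}, measurableSet_singleton 0, rfl⟩),
      ENNReal.toReal_prod]
    congr 1
    exact Finset.prod_congr rfl fun i _ => hAi i
  -- ∏ (1 - pᵢ) ≤ exp(-s)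
  have hq : ∏ i, (1 - p i) ≤ Real.exp (-s) := by
    rw [hsdef, ← Finset.sum_neg_distrib, Real.exp_sum]
    apply Finset.prod_le_prod
    · intro i _; linarith [(hp i).2]
    · intro i _
      have := Real.add_one_le_exp (-(p i))
      linarith
  -- coefficient nonneg
  have hE : (1:ℝ) < Real.exp 1 := by have := Real.exp_one_gt_d9; linarith
  have hcoef : 0 ≤ Real.exp 1 / (Real.exp 1 - 1) := div_nonneg (by linarith) (by linarith)
  calc (ℙ {ω | 0 < ∑ i, X i ω}).toReal
      ≤ min 1 s := le_min h1 hZ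
    _ ≤ Real.exp 1 / (Real.exp 1 - 1) * (1 - Real.exp (-s)) := analytic_key s hs0
    _ ≤ Real.exp 1 / (Real.exp 1 - 1) * (1 - ∏ i, (1 - p i)) := by
        apply mul_le_mul_of_nonneg_left (by linarith) hcoef
    _ = Real.exp 1 / (Real.exp 1 - 1) * (ℙ {ω | 0 < ∑ i, Xt i ω}).toReal := by rw [hZt]
end

section
/- Let X_1,...,X_n be pairwise independent Bernoulli random variables with P(X_i = 1) = p_i, and let X̃_1,...,X̃_n be mutually independent Bernoulli random variables with P(X̃_i = 1) = p_i. Set Z = Σ_{i=1}^n X_i and Z̃ = Σ_{i=1}^n X̃_i. Then P(Z > 0) ≥ (1/2) · P(Z̃ > 0). -/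
open MeasureTheory ProbabilityTheory

/-- **Decoupling from below.** If the Bernoulli(`p i`) random variables `X i` are pairwise
independent and `Xt i` are mutually independent Bernoulli(`p i`), then
`P(Z > 0) ≥ (1/2) · P(Z̃ > 0)`. -/
theorem stmt_1
    {Ω : Type*} [MeasureSpace Ω] [IsProbabilityMeasure (ℙ : Measure Ω)]
    (n : ℕ) (X Xt : Fin n → Ω → ℝ) (p : Fin n → ℝ)
    (hX01 : ∀ i ω, X i ω = 0 ∨ X i ω = 1)
    (hXt01 : ∀ i ω, Xt i ω = 0 ∨ Xt i ω = 1)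
    (hXmeas : ∀ i, Measurable (X i))
    (hXtmeas : ∀ i, Measurable (Xt i))
    (hp : ∀ i, p i ∈ Set.Icc (0 : ℝ) 1)
    (hXp : ∀ i, (ℙ {ω | X i ω = 1}).toReal = p i)
    (hXtp : ∀ i, (ℙ {ω | Xt i ω = 1}).toReal = p i)
    (hpair : ∀ i j, i ≠ j →
      (ℙ {ω | X i ω = 1 ∧ X j ω = 1}).toReal = p i * p j)
    (hindep : iIndepFun Xt ℙ) :
    (ℙ {ω | 0 < ∑ i, X i ω}).toReal ≥
      (1 / 2) * (ℙ {ω | 0 < ∑ i, Xt i ω}).toReal := by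
  classical
  set μ : ℝ := ∑ i, p i with hμ
  have hμ0 : 0 ≤ μ := Finset.sum_nonneg fun i _ => (hp i).1
  set A : Fin n → Set Ω := fun i => {ω | X i ω = 1} with hAdef
  have hAmeas : ∀ i, MeasurableSet (A i) := fun i =>
    (hXmeas i) (measurableSet_singleton 1)
  -- products of the X's are indicators of intersections
  have hprod : ∀ i j ω, X i ω * X j ω = (A i ∩ A j).indicator (fun _ => (1:ℝ)) ω := by
    intro i j ω
    by_cases h : ω ∈ A i ∩ A j
    · have h1 : X i ω = 1 := h.1
      have h2 : X j ω = 1 := h.2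
      simp [Set.indicator_of_mem h, h1, h2]
    · rw [Set.indicator_of_notMem h]
      rcases hX01 i ω with h1 | h1
      · simp [h1]
      rcases hX01 j ω with h2 | h2
      · simp [h2]
      exact absurd ⟨h1, h2⟩ h
  have hXind : ∀ i ω, X i ω = (A i).indicator (fun _ => (1:ℝ)) ω := by
    intro i ω
    by_cases h : ω ∈ A i
    · rw [Set.indicator_of_mem h]; exact h
    · rw [Set.indicator_of_notMem h]
      exact (hX01 i ω).resolve_right h
  -- integrability facts
  have hintprod : ∀ i j, Integrable (fun ω => X i ω * X j ω) ℙ := by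
    intro i j
    have : (fun ω => X i ω * X j ω)
        = (A i ∩ A j).indicator (fun _ => (1:ℝ)) := funext fun ω => hprod i j ω
    rw [this]
    exact (integrable_const (1:ℝ)).indicator ((hAmeas i).inter (hAmeas j))
  have hintX : ∀ i, Integrable (X i) ℙ := by
    intro i
    have : X i = (A i).indicator (fun _ => (1:ℝ)) := funext fun ω => hXind i ω
    rw [this]
    exact (integrable_const (1:ℝ)).indicator (hAmeas i)
  -- integrals
  have hintegX : ∀ i, ∫ ω, X i ω ∂ℙ = p i := by
    intro i
    have : X i = (A i).indicator (fun _ => (1:ℝ)) := funext fun ω => hXind i ω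
    rw [this, integral_indicator_const (1:ℝ) (hAmeas i), smul_eq_mul, mul_one]
    exact hXp i
  have hintegprod : ∀ i j, ∫ ω, X i ω * X j ω ∂ℙ = (ℙ (A i ∩ A j)).toReal := by
    intro i j
    have : (fun ω => X i ω * X j ω)
        = (A i ∩ A j).indicator (fun _ => (1:ℝ)) := funext fun ω => hprod i j ω
    rw [this, integral_indicator_const (1:ℝ) ((hAmeas i).inter (hAmeas j)),
      smul_eq_mul, mul_one, Measure.real]
  -- Z and its moments
  set Z : Ω → ℝ := fun ω => ∑ i, X i ω with hZdef
  have hZmeas : Measurable Z := by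
    apply Finset.measurable_sum
    exact fun i _ => hXmeas i
  have hZ0 : ∀ ω, 0 ≤ Z ω := by
    intro ω
    apply Finset.sum_nonneg
    intro i _
    rcases hX01 i ω with h | h <;> simp [h]
  have hZint : Integrable Z ℙ := integrable_finset_sum _ fun i _ => hintX i
  have hZinteg : ∫ ω, Z ω ∂ℙ = μ := by
    rw [hZdef]
    rw [integral_finset_sum _ fun i _ => hintX i]
    exact Finset.sum_congr rfl fun i _ => hintegX i
  have hZsq : ∀ ω, Z ω * Z ω = ∑ i, ∑ j, X i ω * X j ω := by
    intro ω; exact Finset.sum_mul_sum _ _ _ _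
  have hZsqint : Integrable (fun ω => Z ω * Z ω) ℙ := by
    have : (fun ω => Z ω * Z ω) = fun ω => ∑ i, ∑ j, X i ω * X j ω :=
      funext fun ω => hZsq ω
    rw [this]
    exact integrable_finset_sum _ fun i _ => integrable_finset_sum _ fun j _ => hintprod i j
  have hZsqinteg : ∫ ω, Z ω * Z ω ∂ℙ ≤ μ + μ * μ := by
    have : ∫ ω, Z ω * Z ω ∂ℙ = ∑ i, ∑ j, (ℙ (A i ∩ A j)).toReal := by
      have h1 : (fun ω => Z ω * Z ω) = fun ω => ∑ i, ∑ j, X i ω * X j ω :=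
        funext fun ω => hZsq ω
      rw [h1, integral_finset_sum _ fun i _ => integrable_finset_sum _ fun j _ => hintprod i j]
      refine Finset.sum_congr rfl fun i _ => ?_
      rw [integral_finset_sum _ fun j _ => hintprod i j]
      exact Finset.sum_congr rfl fun j _ => hintegprod i j
    rw [this]
    have hperi : ∀ i, ∑ j, (ℙ (A i ∩ A j)).toReal ≤ p i + p i * μ := by
      intro i
      rw [← Finset.add_sum_erase _ _ (Finset.mem_univ i)]
      have hii : (ℙ (A i ∩ A i)).toReal = p i := by
        rw [Set.inter_self]; exact hXp i
      have hrest : ∑ j ∈ Finset.univ.erase i, (ℙ (A i ∩ A j)).toReal ≤ p i * μ := by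
        have heq : ∑ j ∈ Finset.univ.erase i, (ℙ (A i ∩ A j)).toReal
            = ∑ j ∈ Finset.univ.erase i, p i * p j := by
          refine Finset.sum_congr rfl fun j hj => ?_
          have hij : i ≠ j := (Finset.ne_of_mem_erase hj).symm
          have : A i ∩ A j = {ω | X i ω = 1 ∧ X j ω = 1} := rfl
          rw [this]
          exact hpair i j hij
        rw [heq]
        calc ∑ j ∈ Finset.univ.erase i, p i * p j
            ≤ ∑ j, p i * p j := by
              apply Finset.sum_le_sum_of_subset_of_nonneg (Finset.erase_subset _ _)
              intro j _ _
              exact mul_nonneg (hp i).1 (hp j).1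
          _ = p i * μ := by rw [← Finset.mul_sum]
      linarith [hii, hrest]
    calc ∑ i, ∑ j, (ℙ (A i ∩ A j)).toReal
        ≤ ∑ i, (p i + p i * μ) := Finset.sum_le_sum fun i _ => hperi i
      _ = μ + μ * μ := by rw [Finset.sum_add_distrib, ← Finset.sum_mul]
  -- the event Z > 0
  set S : Set Ω := {ω | 0 < ∑ i, X i ω} with hSdef
  have hSmeas : MeasurableSet S := hZmeas measurableSet_Ioi
  set c : ℝ := 1 + μ with hc
  have hc0 : 0 < c := by linarith
  -- pointwise inequality: 2*c*Z - Z² ≤ c² * 1_S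
  have hpt : ∀ ω, 2 * c * Z ω - Z ω * Z ω ≤ c ^ 2 * S.indicator (fun _ => (1:ℝ)) ω := by
    intro ω
    rcases lt_or_eq_of_le (hZ0 ω) with h | h
    · have hmem : ω ∈ S := h
      rw [Set.indicator_of_mem hmem]
      nlinarith [sq_nonneg (c - Z ω)]
    · have hz : Z ω = 0 := h.symm
      rw [hz]
      have : (0:ℝ) ≤ c ^ 2 * S.indicator (fun _ => (1:ℝ)) ω := by
        apply mul_nonneg (sq_nonneg c)
        exact Set.indicator_nonneg (fun _ _ => zero_le_one) ω
      linarith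
  -- integrate
  have hkey : μ * c ≤ c ^ 2 * (ℙ S).toReal := by
    have hlhsint : Integrable (fun ω => 2 * c * Z ω - Z ω * Z ω) ℙ :=
      ((hZint.const_mul (2 * c)).sub hZsqint)
    have hrhsint : Integrable (fun ω => c ^ 2 * S.indicator (fun _ => (1:ℝ)) ω) ℙ :=
      ((integrable_const (1:ℝ)).indicator hSmeas).const_mul _
    have hmono := integral_mono hlhsint hrhsint hpt
    have h1 : ∫ ω, (2 * c * Z ω - Z ω * Z ω) ∂ℙ
        = 2 * c * μ - ∫ ω, Z ω * Z ω ∂ℙ := by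
      rw [integral_sub (hZint.const_mul (2 * c)) hZsqint, integral_const_mul, hZinteg]
    have h2 : ∫ ω, c ^ 2 * S.indicator (fun _ => (1:ℝ)) ω ∂ℙ
        = c ^ 2 * (ℙ S).toReal := by
      rw [integral_const_mul, integral_indicator_const (1:ℝ) hSmeas, smul_eq_mul, mul_one, Measure.real]
    rw [h1, h2] at hmono
    nlinarith [hZsqinteg]
  have hL : μ ≤ c * (ℙ S).toReal := by
    have := hkey
    rw [hc] at this ⊢
    nlinarith
  -- union bound for the Xt side
  set T : Set Ω := {ω | 0 < ∑ i, Xt i ω} with hTdef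
  have hTsub : T ⊆ ⋃ i, {ω | Xt i ω = 1} := by
    intro ω hω
    have : ∃ i ∈ Finset.univ, Xt i ω ≠ 0 := by
      by_contra h
      push_neg at h
      have : ∑ i, Xt i ω = 0 := Finset.sum_eq_zero fun i hi => h i hi
      simp only [hTdef, Set.mem_setOf_eq] at hω
      linarith
    obtain ⟨i, _, hi⟩ := this
    have : Xt i ω = 1 := (hXt01 i ω).resolve_left hi
    exact Set.mem_iUnion.mpr ⟨i, this⟩
  have hT1 : (ℙ T).toReal ≤ 1 := by
    have h1 : ℙ T ≤ 1 := prob_le_one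
    calc (ℙ T).toReal ≤ (1 : ENNReal).toReal :=
          ENNReal.toReal_mono (by simp) h1
      _ = 1 := by simp
  have hTμ : (ℙ T).toReal ≤ μ := by
    have h1 : ℙ T ≤ ∑ i, ℙ {ω | Xt i ω = 1} :=
      le_trans (measure_mono hTsub) (measure_iUnion_fintype_le _ _)
    have hne : ∀ i ∈ Finset.univ, ℙ {ω | Xt i ω = 1} ≠ ⊤ :=
      fun i _ => measure_ne_top _ _
    calc (ℙ T).toReal ≤ (∑ i, ℙ {ω | Xt i ω = 1}).toReal :=
          ENNReal.toReal_mono (ENNReal.sum_ne_top.mpr hne) h1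
      _ = ∑ i, (ℙ {ω | Xt i ω = 1}).toReal := ENNReal.toReal_sum hne
      _ = μ := Finset.sum_congr rfl fun i _ => hXtp i
  -- finish with arithmetic
  have hS0 : 0 ≤ (ℙ S).toReal := ENNReal.toReal_nonneg
  have hT0 : 0 ≤ (ℙ T).toReal := ENNReal.toReal_nonneg
  show (ℙ S).toReal ≥ (1/2) * (ℙ T).toReal
  rcases le_total μ 1 with h | h
  · have : (ℙ T).toReal ≤ μ := hTμ
    rw [hc] at hL
    nlinarith
  · rw [hc] at hL
    nlinarith
end

section
/- Let X_1,...,X_n be Bernoulli random variables with P(X_i = 1) = p_i satisfying the pairwise negative covariance condition E[X_i X_j] ≤ p_i p_j for all i ≠ j, and let X̃_1,...,X̃_n be mutually independent Bernoulli random variables with P(X̃_i = 1) = p_i. Set Z = Σ_{i=1}^n X_i and Z̃ = Σ_{i=1}^n X̃_i. Then P(Z > 0) ≥ (1/2) · P(Z̃ > 0). -/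
open MeasureTheory ProbabilityTheory

lemma bern_eq_indicator {Ω : Type*} (f : Ω → ℝ) (h01 : ∀ ω, f ω = 0 ∨ f ω = 1) :
    f = ({ω | f ω = 1}).indicator (fun _ => (1:ℝ)) := by
  funext ω
  rcases h01 ω with h | h
  · simp [Set.indicator, h]
  · simp [Set.indicator, h]

lemma bern_integral {Ω : Type*} [MeasureSpace Ω] {f : Ω → ℝ}
    (hm : Measurable f) (h01 : ∀ ω, f ω = 0 ∨ f ω = 1) :
    ∫ ω, f ω = (ℙ {ω | f ω = 1}).toReal := by
  have hs : MeasurableSet {ω | f ω = 1} := hm (measurableSet_singleton 1)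
  conv_lhs => rw [show (fun ω => f ω) = _ from bern_eq_indicator f h01]
  exact integral_indicator_one hs

lemma bdd_integrable {Ω : Type*} [MeasureSpace Ω] [IsProbabilityMeasure (ℙ : Measure Ω)]
    {f : Ω → ℝ} (hm : Measurable f) (C : ℝ) (hb : ∀ ω, |f ω| ≤ C) :
    Integrable f := by
  refine memLp_one_iff_integrable.mp ?_
  exact (memLp_top_of_bound hm.aestronglyMeasurable C (Filter.Eventually.of_forall hb)).mono_exponent le_top

lemma arith_aux (μ q qt : ℝ) (hμ0 : 0 ≤ μ) (hq0 : 0 ≤ q)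
    (hkey : μ * μ ≤ (μ + μ * μ) * q) (hqt1 : qt ≤ 1) (hqtμ : qt ≤ μ) (hqt0 : 0 ≤ qt) :
    q ≥ (1/2) * qt := by
  rcases le_or_gt μ 1 with hc | hc
  · rcases eq_or_lt_of_le hμ0 with h0 | h0
    · nlinarith
    · have h2 : μ + μ * μ ≤ 2 * μ := by nlinarith
      have : μ * μ ≤ 2 * μ * q := by nlinarith [mul_le_mul_of_nonneg_right h2 hq0]
      have hqμ : μ / 2 ≤ q := by nlinarith
      nlinarith
  · have h2 : μ + μ * μ ≤ 2 * (μ * μ) := by nlinarith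
    have : μ * μ ≤ 2 * (μ * μ) * q := by nlinarith [mul_le_mul_of_nonneg_right h2 hq0]
    have hq12 : (1:ℝ)/2 ≤ q := by nlinarith
    nlinarith

/-- **Decoupling from below under pairwise negative covariance.** If the Bernoulli(`p i`)
random variables `X i` satisfy `E[X i * X j] ≤ p i * p j` for all `i ≠ j`, and `Xt i` are
mutually independent Bernoulli(`p i`), then `P(Z > 0) ≥ (1/2) · P(Z̃ > 0)`. -/
theorem stmt_2
    {Ω : Type*} [MeasureSpace Ω] [IsProbabilityMeasure (ℙ : Measure Ω)]
    (n : ℕ) (X Xt : Fin n → Ω → ℝ) (p : Fin n → ℝ)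
    (hX01 : ∀ i ω, X i ω = 0 ∨ X i ω = 1)
    (hXt01 : ∀ i ω, Xt i ω = 0 ∨ Xt i ω = 1)
    (hXmeas : ∀ i, Measurable (X i))
    (hXtmeas : ∀ i, Measurable (Xt i))
    (hp : ∀ i, p i ∈ Set.Icc (0 : ℝ) 1)
    (hXp : ∀ i, (ℙ {ω | X i ω = 1}).toReal = p i)
    (hXtp : ∀ i, (ℙ {ω | Xt i ω = 1}).toReal = p i)
    (hnegcov : ∀ i j, i ≠ j → (∫ ω, X i ω * X j ω) ≤ p i * p j)
    (hindep : iIndepFun Xt ℙ) :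
    (ℙ {ω | 0 < ∑ i, X i ω}).toReal ≥
      (1 / 2) * (ℙ {ω | 0 < ∑ i, Xt i ω}).toReal := by
  classical
  set μ : ℝ := ∑ i, p i with hμdef
  have hμ0 : 0 ≤ μ := Finset.sum_nonneg fun i _ => (hp i).1
  -- basic bounds on X
  have hX0 : ∀ i ω, 0 ≤ X i ω := fun i ω => by rcases hX01 i ω with h | h <;> simp [h]
  have hX1 : ∀ i ω, X i ω ≤ 1 := fun i ω => by rcases hX01 i ω with h | h <;> simp [h]
  set S : Ω → ℝ := fun ω => ∑ i, X i ω with hSdef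
  have hSmeas : Measurable S := Finset.measurable_sum _ fun i _ => hXmeas i
  have hS0 : ∀ ω, 0 ≤ S ω := fun ω => Finset.sum_nonneg fun i _ => hX0 i ω
  have hSn : ∀ ω, S ω ≤ n := by
    intro ω
    calc S ω ≤ ∑ _i : Fin n, (1:ℝ) := Finset.sum_le_sum fun i _ => hX1 i ω
    _ = n := by simp
  set A : Set Ω := {ω | 0 < S ω} with hAdef
  have hAmeas : MeasurableSet A := measurableSet_lt measurable_const hSmeas
  set q : ℝ := (ℙ A).toReal with hqdef
  have hq0 : 0 ≤ q := ENNReal.toReal_nonneg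
  -- integrability
  have hintX : ∀ i, Integrable (X i) := fun i =>
    bdd_integrable (hXmeas i) 1 (fun ω => abs_le.mpr ⟨by linarith [hX0 i ω], hX1 i ω⟩)
  have hintXX : ∀ i j, Integrable (fun ω => X i ω * X j ω) := fun i j =>
    bdd_integrable ((hXmeas i).mul (hXmeas j)) 1 (fun ω => abs_le.mpr
      ⟨by nlinarith [hX0 i ω, hX0 j ω], by nlinarith [hX0 i ω, hX1 i ω, hX0 j ω, hX1 j ω]⟩)
  -- expectations
  have hEX : ∀ i, ∫ ω, X i ω = p i := fun i => (bern_integral (hXmeas i) (hX01 i)).trans (hXp i)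
  have hES : ∫ ω, S ω = μ := by
    rw [hSdef, integral_finset_sum _ fun i _ => hintX i]
    exact Finset.sum_congr rfl fun i _ => hEX i
  -- second moment bound
  have hdiag : ∀ i, (∫ ω, X i ω * X i ω) = p i := by
    intro i
    have : (fun ω => X i ω * X i ω) = fun ω => X i ω := by
      funext ω; rcases hX01 i ω with h | h <;> simp [h]
    rw [this]; exact hEX i
  have hES2 : ∫ ω, S ω * S ω ≤ μ + μ * μ := by
    have hexp : (fun ω => S ω * S ω) = fun ω => ∑ i, ∑ j, X i ω * X j ω := by
      funext ω; rw [hSdef]; rw [Finset.sum_mul_sum]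
    rw [hexp, integral_finset_sum _ fun i _ => integrable_finset_sum _ fun j _ => hintXX i j]
    have h1 : ∀ i : Fin n, (∫ ω, ∑ j, X i ω * X j ω) ≤ ∑ j, (p i * p j + if i = j then p i else 0) := by
      intro i
      rw [integral_finset_sum _ fun j _ => hintXX i j]
      refine Finset.sum_le_sum fun j _ => ?_
      by_cases h : i = j
      · subst h
        have hif : (if i = i then p i else 0) = p i := if_pos rfl
        rw [hdiag i, hif]
        nlinarith [(hp i).1]
      · simp only [if_neg h, add_zero]; exact hnegcov i j h
    calc (∑ i, ∫ ω, ∑ j, X i ω * X j ω)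
        ≤ ∑ i, ∑ j, (p i * p j + if i = j then p i else 0) :=
          Finset.sum_le_sum fun i _ => h1 i
      _ = μ * μ + μ := by
          simp only [Finset.sum_add_distrib]
          rw [← Finset.sum_mul_sum]
          congr 1
          exact Finset.sum_congr rfl fun i _ => by simp
      _ = μ + μ * μ := by ring
  -- Cauchy–Schwarz : μ^2 ≤ (∫ S²) * q
  set g : Ω → ℝ := A.indicator (fun _ => (1:ℝ)) with hgdef
  have hg01 : ∀ ω, g ω = 0 ∨ g ω = 1 := by
    intro ω; by_cases h : ω ∈ A <;> simp [hgdef, Set.indicator, h]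
  have hgmeas : Measurable g := measurable_const.indicator hAmeas
  have hSg : ∀ ω, S ω * g ω = S ω := by
    intro ω
    by_cases h : ω ∈ A
    · simp [hgdef, Set.indicator, h]
    · have : S ω = 0 := le_antisymm (not_lt.mp h) (hS0 ω)
      simp [this]
  have hmemS : MemLp S (ENNReal.ofReal 2) :=
    (memLp_top_of_bound hSmeas.aestronglyMeasurable n (Filter.Eventually.of_forall fun ω =>
      abs_le.mpr ⟨by linarith [hS0 ω, hSn ω], hSn ω⟩)).mono_exponent le_top
  have hmemg : MemLp g (ENNReal.ofReal 2) :=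
    (memLp_top_of_bound hgmeas.aestronglyMeasurable 1 (Filter.Eventually.of_forall fun ω => by
      rcases hg01 ω with h | h <;> simp [h])).mono_exponent le_top
  have hconj : Real.HolderConjugate 2 2 := Real.holderConjugate_iff.mpr ⟨one_lt_two, by norm_num⟩
  have hCS := integral_mul_le_Lp_mul_Lq_of_nonneg hconj
    (Filter.Eventually.of_forall hS0)
    (Filter.Eventually.of_forall fun ω => by rcases hg01 ω with h | h <;> simp [h])
    hmemS hmemg
  have hg2 : (∫ ω, g ω ^ (2:ℝ)) = q := by
    have : (fun ω => g ω ^ (2:ℝ)) = g := by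
      funext ω; rcases hg01 ω with h | h <;> simp [h]
    rw [this]
    exact integral_indicator_one hAmeas
  have hS2eq : (∫ ω, S ω ^ (2:ℝ)) = ∫ ω, S ω * S ω := by
    refine integral_congr_ae (Filter.Eventually.of_forall fun ω => ?_)
    show S ω ^ (2:ℝ) = S ω * S ω
    rw [Real.rpow_two]
    ring
  have hμle : μ ≤ (∫ ω, S ω * S ω) ^ ((1:ℝ)/2) * q ^ ((1:ℝ)/2) := by
    calc μ = ∫ ω, S ω * g ω := by
            rw [← hES]
            exact integral_congr_ae (Filter.Eventually.of_forall fun ω => (hSg ω).symm)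
      _ ≤ (∫ ω, S ω ^ (2:ℝ)) ^ ((1:ℝ)/2) * (∫ ω, g ω ^ (2:ℝ)) ^ ((1:ℝ)/2) := hCS
      _ = (∫ ω, S ω * S ω) ^ ((1:ℝ)/2) * q ^ ((1:ℝ)/2) := by rw [hS2eq, hg2]
  have hES2nn : 0 ≤ ∫ ω, S ω * S ω :=
    integral_nonneg fun ω => mul_self_nonneg _
  have hμsq : μ * μ ≤ (∫ ω, S ω * S ω) * q := by
    have h := mul_le_mul hμle hμle hμ0 (by positivity)
    calc μ * μ ≤ ((∫ ω, S ω * S ω) ^ ((1:ℝ)/2) * q ^ ((1:ℝ)/2)) *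
          ((∫ ω, S ω * S ω) ^ ((1:ℝ)/2) * q ^ ((1:ℝ)/2)) := h
      _ = ((∫ ω, S ω * S ω) ^ ((1:ℝ)/2) * (∫ ω, S ω * S ω) ^ ((1:ℝ)/2)) *
          (q ^ ((1:ℝ)/2) * q ^ ((1:ℝ)/2)) := by ring
      _ = (∫ ω, S ω * S ω) * q := by
          rw [← Real.rpow_add' hES2nn (by norm_num), ← Real.rpow_add' hq0 (by norm_num)]
          norm_num
  have hkey : μ * μ ≤ (μ + μ * μ) * q := by
    refine hμsq.trans (mul_le_mul_of_nonneg_right hES2 hq0)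
  -- bound for the independent side (union bound)
  set qt : ℝ := (ℙ {ω | 0 < ∑ i, Xt i ω}).toReal with hqtdef
  have hqt1 : qt ≤ 1 := by
    calc qt ≤ (1:ENNReal).toReal := ENNReal.toReal_mono ENNReal.one_ne_top prob_le_one
      _ = 1 := by simp
  have hqtμ : qt ≤ μ := by
    have hsub : {ω | 0 < ∑ i, Xt i ω} ⊆ ⋃ i : Fin n, {ω | Xt i ω = 1} := by
      intro ω hω
      by_contra hc
      simp only [Set.mem_iUnion, not_exists] at hc
      have : ∀ i, Xt i ω = 0 := fun i => (hXt01 i ω).resolve_right (hc i)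
      simp only [Set.mem_setOf_eq] at hω
      rw [Finset.sum_congr rfl fun i _ => this i] at hω
      simp at hω
    calc qt ≤ (ℙ (⋃ i : Fin n, {ω | Xt i ω = 1})).toReal := by
          refine ENNReal.toReal_mono (measure_ne_top _ _) (measure_mono hsub)
      _ ≤ ∑ i, (ℙ {ω | Xt i ω = 1}).toReal := by
          rw [← ENNReal.toReal_sum (fun i _ => measure_ne_top _ _)]
          exact ENNReal.toReal_mono (by exact (ENNReal.sum_lt_top.mpr fun i _ => measure_lt_top _ _).ne)
            (measure_iUnion_fintype_le _ _)
      _ = μ := Finset.sum_congr rfl fun i _ => hXtp i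
  -- conclude
  have hqt0 : 0 ≤ qt := ENNReal.toReal_nonneg
  have hgoal : q ≥ (1/2) * qt := arith_aux μ q qt hμ0 hq0 hkey hqt1 hqtμ hqt0
  exact hgoal
end

section
/- Let X_1,...,X_n be nonnegative integrable random variables and let X̃_1,...,X̃_n be mutually independent random variables with X̃_i distributed identically to X_i for each i. Then E[max_{i∈[n]} X_i] ≤ (e/(e-1)) · E[max_{i∈[n]} X̃_i]. -/
open MeasureTheory ProbabilityTheory

lemma aux_exp (s : ℝ) (hs : 0 ≤ s) :
    min 1 s * (1 - (Real.exp 1)⁻¹) ≤ 1 - Real.exp (-s) := by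
  rcases le_or_gt s 1 with h | h
  · rw [min_eq_right h]
    have hc := (convexOn_exp.2 (Set.mem_univ (0:ℝ)) (Set.mem_univ (-1:ℝ))
      (by linarith : (0:ℝ) ≤ 1 - s) hs (by ring) : _)
    simp only [smul_eq_mul, mul_zero, mul_neg, mul_one, zero_add, Real.exp_zero] at hc
    simp only [Real.exp_neg] at hc ⊢
    nlinarith
  · rw [min_eq_left h.le, one_mul]
    have h2 : Real.exp (-s) ≤ Real.exp (-1) := Real.exp_le_exp.2 (by linarith)
    simp only [Real.exp_neg] at h2 ⊢
    linarith

lemma aux_prod {n : ℕ} (p : Fin n → ℝ) (h0 : ∀ i, 0 ≤ p i) (h1 : ∀ i, p i ≤ 1) :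
    min 1 (∑ i, p i) * (1 - (Real.exp 1)⁻¹) ≤ 1 - ∏ i, (1 - p i) := by
  have hs : 0 ≤ ∑ i, p i := Finset.sum_nonneg fun i _ => h0 i
  have hprod : ∏ i, (1 - p i) ≤ Real.exp (-∑ i, p i) := by
    have : Real.exp (-∑ i, p i) = ∏ i, Real.exp (-p i) := by
      rw [← Real.exp_sum, ← Finset.sum_neg_distrib]
    rw [this]
    exact Finset.prod_le_prod (fun i _ => by linarith [h1 i])
      (fun i _ => by linarith [Real.add_one_le_exp (-p i)])
  have := aux_exp (∑ i, p i) hs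
  linarith

/-- **Decoupling from above, continuous case.** For nonnegative integrable random variables
`X i` (no independence assumed) and mutually independent `Xt i` with `Xt i` distributed as
`X i`, one has `E[max_i X i] ≤ (e/(e-1)) · E[max_i Xt i]`. -/
theorem stmt_3
    {Ω : Type*} [MeasureSpace Ω] [IsProbabilityMeasure (ℙ : Measure Ω)]
    (n : ℕ) (X Xt : Fin n → Ω → ℝ)
    (hXnn : ∀ i ω, 0 ≤ X i ω)
    (hXmeas : ∀ i, Measurable (X i))
    (hXtmeas : ∀ i, Measurable (Xt i))
    (hXint : ∀ i, Integrable (X i))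
    (hident : ∀ i, IdentDistrib (Xt i) (X i) ℙ ℙ)
    (hindep : iIndepFun Xt ℙ) :
    (∫ ω, ⨆ i, X i ω) ≤ Real.exp 1 / (Real.exp 1 - 1) * ∫ ω, ⨆ i, Xt i ω := by
  rcases Nat.eq_zero_or_pos n with rfl | hn
  · simp [ciSup_of_empty, Real.sSup_empty]
  haveI : Nonempty (Fin n) := Fin.pos_iff_nonempty.mp hn
  set c : ℝ := Real.exp 1 / (Real.exp 1 - 1) with hc
  have he1 : (1:ℝ) < Real.exp 1 := by
    have := Real.add_one_le_exp (1:ℝ); linarith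
  have hcpos : 0 < c := div_pos (by linarith) (by linarith)
  have hkey : c * (1 - (Real.exp 1)⁻¹) = 1 := by
    have hne : Real.exp 1 - 1 ≠ 0 := ne_of_gt (by linarith)
    have hne2 : Real.exp 1 ≠ 0 := (Real.exp_pos 1).ne'
    rw [hc, div_mul_eq_mul_div, mul_sub, mul_one, mul_inv_cancel₀ hne2, div_self hne]
  have fin : ∀ s : Set Ω, (ℙ : Measure Ω) s ≠ ⊤ := fun s => measure_ne_top ℙ s
  set M : Ω → ℝ := fun ω => ⨆ i, X i ω with hM
  set Mt : Ω → ℝ := fun ω => ⨆ i, Xt i ω with hMt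
  have hMmeas : Measurable M := Measurable.iSup hXmeas
  have hMtmeas : Measurable Mt := Measurable.iSup hXtmeas
  have hbdd : ∀ ω, BddAbove (Set.range fun i => X i ω) :=
    fun ω => (Set.finite_range _).bddAbove
  have hbddt : ∀ ω, BddAbove (Set.range fun i => Xt i ω) :=
    fun ω => (Set.finite_range _).bddAbove
  have hMnn : ∀ ω, 0 ≤ M ω := fun ω =>
    le_trans (hXnn (Classical.arbitrary _) ω) (le_ciSup (hbdd ω) _)
  have hXtnn : ∀ i, ∀ᵐ ω ∂(ℙ : Measure Ω), 0 ≤ Xt i ω := by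
    intro i
    have heq : (ℙ : Measure Ω) (Xt i ⁻¹' Set.Iio 0) = ℙ (X i ⁻¹' Set.Iio 0) :=
      (hident i).measure_mem_eq measurableSet_Iio
    have h0 : (ℙ : Measure Ω) (X i ⁻¹' Set.Iio 0) = 0 := by
      have hempty : X i ⁻¹' Set.Iio 0 = ∅ := by
        ext ω; simp [Set.mem_preimage, not_lt, hXnn i ω]
      simp [hempty]
    rw [ae_iff]
    simpa [Set.preimage, not_le] using heq.trans h0
  have hMtnn : ∀ᵐ ω ∂(ℙ : Measure Ω), 0 ≤ Mt ω := by
    filter_upwards [ae_all_iff.2 hXtnn] with ω hω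
    exact le_trans (hω (Classical.arbitrary _)) (le_ciSup (hbddt ω) _)
  have hXtint : ∀ i, Integrable (Xt i) := fun i => (hident i).integrable_iff.2 (hXint i)
  have hMtint : Integrable Mt := by
    refine (integrable_finset_sum Finset.univ (fun i _ => (hXtint i).abs)).mono
      hMtmeas.aestronglyMeasurable ?_
    filter_upwards with ω
    have hb : ∀ j, Xt j ω ≤ ∑ i, |Xt i ω| := fun j =>
      le_trans (le_abs_self _)
        (Finset.single_le_sum (f := fun i => |Xt i ω|) (fun i _ => abs_nonneg _)
          (Finset.mem_univ j))
    have h1 : Mt ω ≤ ∑ i, |Xt i ω| := ciSup_le hb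
    have h2 : -(∑ i, |Xt i ω|) ≤ Mt ω := by
      refine le_trans ?_ (le_ciSup (hbddt ω) (Classical.arbitrary _))
      have h3 : |Xt (Classical.arbitrary (Fin n)) ω| ≤ ∑ i, |Xt i ω| :=
        Finset.single_le_sum (f := fun i => |Xt i ω|) (fun i _ => abs_nonneg _)
          (Finset.mem_univ _)
      have h4 := neg_abs_le (Xt (Classical.arbitrary (Fin n)) ω)
      linarith
    rw [Real.norm_eq_abs, Real.norm_eq_abs]
    exact (abs_le.2 ⟨h2, h1⟩).trans (le_abs_self _)
  -- pointwise tail bound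
  have htail : ∀ t : ℝ, 0 < t →
      (ℙ : Measure Ω) {ω | t < M ω} ≤ ENNReal.ofReal c * ℙ {ω | t < Mt ω} := by
    intro t ht
    set p : Fin n → ℝ := fun i => ((ℙ : Measure Ω) {ω | t < Xt i ω}).toReal with hp
    have hp0 : ∀ i, 0 ≤ p i := fun i => ENNReal.toReal_nonneg
    have hp1 : ∀ i, p i ≤ 1 := fun i => by
      rw [hp]; exact ENNReal.toReal_le_of_le_ofReal one_pos.le (by simpa using prob_le_one)
    have hqi : ∀ i, ((ℙ : Measure Ω) (Xt i ⁻¹' Set.Iic t)).toReal = 1 - p i := by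
      intro i
      have hcompl : (Xt i ⁻¹' Set.Iic t)ᶜ = {ω | t < Xt i ω} := by
        ext ω; simp [not_le]
      have hadd := measure_add_measure_compl (μ := (ℙ : Measure Ω))
        (s := Xt i ⁻¹' Set.Iic t) (hXtmeas i measurableSet_Iic)
      rw [hcompl, measure_univ] at hadd
      have htr := congrArg ENNReal.toReal hadd
      rw [ENNReal.toReal_add (fin _) (fin _)] at htr
      simp only [ENNReal.toReal_one] at htr
      rw [hp]; linarith
    have hInter : {ω | t < Mt ω}ᶜ = ⋂ i, Xt i ⁻¹' Set.Iic t := by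
      ext ω
      simp only [Set.mem_compl_iff, Set.mem_setOf_eq, not_lt, Set.mem_iInter, Set.mem_preimage,
        Set.mem_Iic, hMt]
      exact ciSup_le_iff (hbddt ω)
    have hprodmeas : (ℙ : Measure Ω) (⋂ i, Xt i ⁻¹' Set.Iic t) = ∏ i, ℙ (Xt i ⁻¹' Set.Iic t) :=
      hindep.meas_iInter fun i => ⟨Set.Iic t, measurableSet_Iic, rfl⟩
    have hms : MeasurableSet {ω | t < Mt ω} := hMtmeas measurableSet_Ioi
    have hMt_tail : ((ℙ : Measure Ω) {ω | t < Mt ω}).toReal = 1 - ∏ i, (1 - p i) := by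
      have hadd := measure_add_measure_compl (μ := (ℙ : Measure Ω)) hms
      rw [hInter, hprodmeas, measure_univ] at hadd
      have htr := congrArg ENNReal.toReal hadd
      rw [ENNReal.toReal_add (fin _) (ENNReal.prod_ne_top fun i _ => fin _),
        ENNReal.toReal_prod] at htr
      simp only [ENNReal.toReal_one] at htr
      have : ∀ i ∈ Finset.univ, ((ℙ : Measure Ω) (Xt i ⁻¹' Set.Iic t)).toReal = 1 - p i :=
        fun i _ => hqi i
      rw [Finset.prod_congr rfl this] at htr
      linarith
    -- union bound for M
    have hM_tail : ((ℙ : Measure Ω) {ω | t < M ω}).toReal ≤ min 1 (∑ i, p i) := by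
      refine le_min (le_trans (ENNReal.toReal_mono ENNReal.one_ne_top prob_le_one) (by simp)) ?_
      have hsub : {ω | t < M ω} ⊆ ⋃ i, {ω | t < X i ω} := by
        intro ω hω
        obtain ⟨i, hi⟩ := (lt_ciSup_iff (hbdd ω)).1 hω
        exact Set.mem_iUnion.2 ⟨i, hi⟩
      have hid : ∀ i, (ℙ : Measure Ω) {ω | t < X i ω} = ℙ {ω | t < Xt i ω} := fun i =>
        ((hident i).measure_mem_eq measurableSet_Ioi).symm
      have h1 : (ℙ : Measure Ω) {ω | t < M ω} ≤ ∑ i, ℙ {ω | t < Xt i ω} := by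
        refine (measure_mono hsub).trans ((measure_iUnion_fintype_le _ _).trans ?_)
        exact le_of_eq (Finset.sum_congr rfl fun i _ => hid i)
      calc ((ℙ : Measure Ω) {ω | t < M ω}).toReal
          ≤ (∑ i, (ℙ : Measure Ω) {ω | t < Xt i ω}).toReal :=
            ENNReal.toReal_mono (ENNReal.sum_ne_top.2 fun i _ => fin _) h1
        _ = ∑ i, p i := ENNReal.toReal_sum fun i _ => fin _
    -- combine
    have hfinal : ((ℙ : Measure Ω) {ω | t < M ω}).toReal ≤
        c * ((ℙ : Measure Ω) {ω | t < Mt ω}).toReal := by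
      have haux := aux_prod p hp0 hp1
      have h5 : c * (min 1 (∑ i, p i) * (1 - (Real.exp 1)⁻¹)) ≤
          c * (1 - ∏ i, (1 - p i)) := mul_le_mul_of_nonneg_left haux hcpos.le
      have h6 : c * (min 1 (∑ i, p i) * (1 - (Real.exp 1)⁻¹)) = min 1 (∑ i, p i) := by
        calc c * (min 1 (∑ i, p i) * (1 - (Real.exp 1)⁻¹))
            = (c * (1 - (Real.exp 1)⁻¹)) * min 1 (∑ i, p i) := by ring
          _ = min 1 (∑ i, p i) := by rw [hkey, one_mul]
      rw [hMt_tail]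
      linarith
    calc (ℙ : Measure Ω) {ω | t < M ω}
        = ENNReal.ofReal ((ℙ : Measure Ω) {ω | t < M ω}).toReal :=
          (ENNReal.ofReal_toReal (fin _)).symm
      _ ≤ ENNReal.ofReal (c * ((ℙ : Measure Ω) {ω | t < Mt ω}).toReal) :=
          ENNReal.ofReal_le_ofReal hfinal
      _ = ENNReal.ofReal c * ENNReal.ofReal ((ℙ : Measure Ω) {ω | t < Mt ω}).toReal :=
          ENNReal.ofReal_mul hcpos.le
      _ = ENNReal.ofReal c * (ℙ : Measure Ω) {ω | t < Mt ω} := by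
          rw [ENNReal.ofReal_toReal (fin _)]
  -- layer cake and integration
  have hlayerM := lintegral_eq_lintegral_meas_lt (ℙ : Measure Ω)
    (Filter.Eventually.of_forall hMnn) hMmeas.aemeasurable
  have hlayerMt := lintegral_eq_lintegral_meas_lt (ℙ : Measure Ω) hMtnn hMtmeas.aemeasurable
  have hle : ∫⁻ ω, ENNReal.ofReal (M ω) ≤ ENNReal.ofReal c * ∫⁻ ω, ENNReal.ofReal (Mt ω) := by
    rw [hlayerM, hlayerMt, ← lintegral_const_mul' _ _ ENNReal.ofReal_ne_top]
    refine lintegral_mono_ae ?_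
    rw [ae_restrict_iff' measurableSet_Ioi]
    exact Filter.Eventually.of_forall fun t ht => htail t ht
  have hfin : ∫⁻ ω, ENNReal.ofReal (Mt ω) ≠ ⊤ := hMtint.lintegral_lt_top.ne
  rw [integral_eq_lintegral_of_nonneg_ae (Filter.Eventually.of_forall hMnn)
      hMmeas.aestronglyMeasurable,
    integral_eq_lintegral_of_nonneg_ae hMtnn hMtmeas.aestronglyMeasurable]
  calc (∫⁻ ω, ENNReal.ofReal (M ω)).toReal
      ≤ (ENNReal.ofReal c * ∫⁻ ω, ENNReal.ofReal (Mt ω)).toReal :=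
        ENNReal.toReal_mono (ENNReal.mul_ne_top ENNReal.ofReal_ne_top hfin) hle
    _ = c * (∫⁻ ω, ENNReal.ofReal (Mt ω)).toReal := by
        rw [ENNReal.toReal_mul, ENNReal.toReal_ofReal hcpos.le]
end

section
/- Let X_1,...,X_n be nonnegative integrable random variables that are pairwise independent, and let X̃_1,...,X̃_n be mutually independent random variables with X̃_i distributed identically to X_i for each i. Then E[max_{i∈[n]} X_i] ≥ (1/2) · E[max_{i∈[n]} X̃_i]. -/
open MeasureTheory ProbabilityTheory

lemma key_union_bound {Ω : Type*} [MeasureSpace Ω] [IsProbabilityMeasure (ℙ : Measure Ω)]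
    {n : ℕ} (A : Fin n → Set Ω) (hA : ∀ i, MeasurableSet (A i))
    (hind : ∀ i j, i ≠ j → ℙ (A i ∩ A j) = ℙ (A i) * ℙ (A j)) :
    (∑ i, (ℙ (A i)).toReal) / (1 + ∑ i, (ℙ (A i)).toReal) ≤ (ℙ (⋃ i, A i)).toReal := by
  classical
  set p : Fin n → ℝ := fun i => (ℙ (A i)).toReal with hp
  set s : ℝ := ∑ i, p i with hs
  have hpnn : ∀ i, 0 ≤ p i := fun i => ENNReal.toReal_nonneg
  have hsnn : 0 ≤ s := Finset.sum_nonneg fun i _ => hpnn i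
  set c : ℝ := 1 + s with hc
  have hcpos : 0 < c := by positivity
  set N : Ω → ℝ := fun ω => ∑ i, (A i).indicator (1 : Ω → ℝ) ω with hN
  have hint1 : ∀ i : Fin n, Integrable ((A i).indicator (1 : Ω → ℝ)) :=
    fun i => (integrable_const 1).indicator (hA i)
  have hNint : Integrable N := integrable_finset_sum _ fun i _ => hint1 i
  have hEN : ∫ ω, N ω = s := by
    rw [integral_finset_sum _ fun i _ => hint1 i]
    exact Finset.sum_congr rfl fun i _ => integral_indicator_one (hA i)
  have hNsq : ∀ ω, N ω ^ 2 = ∑ i, ∑ j, ((A i ∩ A j).indicator (1 : Ω → ℝ)) ω := by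
    intro ω
    rw [sq, hN]
    rw [Finset.sum_mul_sum]
    refine Finset.sum_congr rfl fun i _ => Finset.sum_congr rfl fun j _ => ?_
    rw [Set.inter_indicator_one]
    rfl
  have hint2 : ∀ (i j : Fin n), Integrable ((A i ∩ A j).indicator (1 : Ω → ℝ)) :=
    fun i j => (integrable_const 1).indicator ((hA i).inter (hA j))
  have hN2int : Integrable (fun ω => N ω ^ 2) := by
    have : Integrable (fun ω => ∑ i, ∑ j, ((A i ∩ A j).indicator (1 : Ω → ℝ)) ω) :=
      integrable_finset_sum _ fun i _ => integrable_finset_sum _ fun j _ => hint2 i j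
    exact this.congr (Filter.Eventually.of_forall fun ω => (hNsq ω).symm)
  have hEN2 : ∫ ω, N ω ^ 2 ≤ s + s ^ 2 := by
    have h1 : ∫ ω, N ω ^ 2 = ∑ i, ∑ j, (ℙ (A i ∩ A j)).toReal := by
      rw [integral_congr_ae (Filter.Eventually.of_forall hNsq)]
      rw [integral_finset_sum _ fun i _ => integrable_finset_sum _ fun j _ => hint2 i j]
      refine Finset.sum_congr rfl fun i _ => ?_
      rw [integral_finset_sum _ fun j _ => hint2 i j]
      exact Finset.sum_congr rfl fun j _ => integral_indicator_one ((hA i).inter (hA j))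
    rw [h1]
    have h2 : ∀ (i j : Fin n), (ℙ (A i ∩ A j)).toReal
        ≤ p i * p j + (if i = j then p i else 0) := by
      intro i j
      by_cases h : i = j
      · subst h
        simp only [Set.inter_self, if_true]
        nlinarith [hpnn i]
      · rw [hind i j h, ENNReal.toReal_mul, if_neg h, add_zero]
    calc ∑ i, ∑ j, (ℙ (A i ∩ A j)).toReal
        ≤ ∑ i, ∑ j, (p i * p j + (if i = j then p i else 0)) :=
          Finset.sum_le_sum fun i _ => Finset.sum_le_sum fun j _ => h2 i j
      _ = s + s ^ 2 := by
          simp only [Finset.sum_add_distrib, Finset.sum_ite_eq, Finset.mem_univ, if_true]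
          rw [← Finset.sum_mul_sum]
          ring
  -- pointwise bound
  have hpt : ∀ ω, (2 * c * N ω - N ω ^ 2) / c ^ 2 ≤ (⋃ i, A i).indicator (1 : Ω → ℝ) ω := by
    intro ω
    by_cases h : ω ∈ ⋃ i, A i
    · rw [Set.indicator_of_mem h, Pi.one_apply]
      rw [div_le_one (by positivity)]
      nlinarith [sq_nonneg (c - N ω)]
    · have hzero : N ω = 0 := Finset.sum_eq_zero fun i _ =>
        Set.indicator_of_notMem (fun hi => h (Set.mem_iUnion.2 ⟨i, hi⟩)) _
      rw [Set.indicator_of_notMem h, hzero]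
      norm_num
  have hLint : Integrable (fun ω => (2 * c * N ω - N ω ^ 2) / c ^ 2) :=
    ((hNint.const_mul (2 * c)).sub hN2int).div_const _
  have hRint : Integrable ((⋃ i, A i).indicator (1 : Ω → ℝ)) :=
    (integrable_const 1).indicator (MeasurableSet.iUnion fun i => hA i)
  have hmono := integral_mono hLint hRint hpt
  rw [integral_indicator_one (MeasurableSet.iUnion fun i => hA i)] at hmono
  have hEL : ∫ ω, (2 * c * N ω - N ω ^ 2) / c ^ 2
      = (2 * c * s - ∫ ω, N ω ^ 2) / c ^ 2 := by
    rw [integral_div, integral_sub (hNint.const_mul (2 * c)) hN2int,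
      integral_const_mul, hEN]
  rw [hEL] at hmono
  refine le_trans ?_ hmono
  rw [div_le_div_iff₀ hcpos (by positivity)]
  have h3 : (∫ ω, N ω ^ 2) * c ≤ (s + s ^ 2) * c :=
    mul_le_mul_of_nonneg_right hEN2 hcpos.le
  have h4 : 2 * c * s * c - (s + s ^ 2) * c = s * c ^ 2 := by rw [hc]; ring
  calc s * c ^ 2 = 2 * c * s * c - (s + s ^ 2) * c := h4.symm
    _ ≤ 2 * c * s * c - (∫ ω, N ω ^ 2) * c := by linarith
    _ = (2 * c * s - ∫ ω, N ω ^ 2) * c := by ring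

/-- **Decoupling from below, continuous case.** For nonnegative integrable pairwise
independent random variables `X i` and mutually independent `Xt i` with `Xt i` distributed
as `X i`, one has `E[max_i X i] ≥ (1/2) · E[max_i Xt i]`. -/
theorem stmt_4
    {Ω : Type*} [MeasureSpace Ω] [IsProbabilityMeasure (ℙ : Measure Ω)]
    (n : ℕ) (X Xt : Fin n → Ω → ℝ)
    (hXnn : ∀ i ω, 0 ≤ X i ω)
    (hXmeas : ∀ i, Measurable (X i))
    (hXtmeas : ∀ i, Measurable (Xt i))
    (hXint : ∀ i, Integrable (X i))
    (hpair : ∀ i j, i ≠ j → IndepFun (X i) (X j) ℙ)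
    (hident : ∀ i, IdentDistrib (Xt i) (X i) ℙ ℙ)
    (hindep : iIndepFun Xt ℙ) :
    (∫ ω, ⨆ i, X i ω) ≥ (1 / 2) * ∫ ω, ⨆ i, Xt i ω := by
  rcases Nat.eq_zero_or_pos n with hn | hn
  · subst hn
    simp [Real.iSup_of_isEmpty]
  haveI : Nonempty (Fin n) := ⟨⟨0, hn⟩⟩
  set MX : Ω → ℝ := fun ω => ⨆ i, X i ω with hMX
  set MXt : Ω → ℝ := fun ω => ⨆ i, Xt i ω with hMXt
  have hMXmeas : Measurable MX := Measurable.iSup hXmeas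
  have hMXtmeas : Measurable MXt := Measurable.iSup hXtmeas
  have hXtint : ∀ i, Integrable (Xt i) := fun i => ((hident i).integrable_iff).2 (hXint i)
  have hXtnn : ∀ i, ∀ᵐ ω, 0 ≤ Xt i ω := by
    intro i
    have h := (hident i).measure_mem_eq (measurableSet_Iio (a := (0:ℝ)))
    have h2 : X i ⁻¹' Set.Iio 0 = ∅ := by
      ext ω; simp only [Set.mem_preimage, Set.mem_Iio, Set.mem_empty_iff_false, iff_false,
        not_lt]
      exact hXnn i ω
    rw [h2, measure_empty] at h
    rw [ae_iff]
    convert h using 2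
    ext ω
    simp [not_le]
  have hMXnn : ∀ ω, 0 ≤ MX ω := fun ω =>
    le_ciSup_of_le (Set.Finite.bddAbove (Set.finite_range _)) ⟨0, hn⟩ (hXnn _ ω)
  have hMXtnn : ∀ᵐ ω, 0 ≤ MXt ω := by
    filter_upwards [ae_all_iff.2 hXtnn] with ω hω
    exact le_ciSup_of_le (Set.Finite.bddAbove (Set.finite_range _)) ⟨0, hn⟩ (hω _)
  have hMXint : Integrable MX := by
    refine Integrable.mono (integrable_finset_sum Finset.univ fun i _ => hXint i)
      hMXmeas.aestronglyMeasurable ?_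
    filter_upwards with ω
    rw [Real.norm_eq_abs, Real.norm_eq_abs, abs_of_nonneg (hMXnn ω),
      abs_of_nonneg (Finset.sum_nonneg fun i _ => hXnn i ω)]
    exact ciSup_le fun i => Finset.single_le_sum (fun j _ => hXnn j ω) (Finset.mem_univ i)
  have hMXtint : Integrable MXt := by
    refine Integrable.mono (integrable_finset_sum Finset.univ fun i _ => hXtint i)
      hMXtmeas.aestronglyMeasurable ?_
    filter_upwards [ae_all_iff.2 hXtnn, hMXtnn] with ω hω hω0
    rw [Real.norm_eq_abs, Real.norm_eq_abs, abs_of_nonneg hω0,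
      abs_of_nonneg (Finset.sum_nonneg fun i _ => hω i)]
    exact ciSup_le fun i => Finset.single_le_sum (fun j _ => hω j) (Finset.mem_univ i)
  have htailX : ∀ t : ℝ, {ω | t < MX ω} = ⋃ i, X i ⁻¹' Set.Ioi t := by
    intro t; ext ω
    simp only [Set.mem_setOf_eq, Set.mem_iUnion, Set.mem_preimage, Set.mem_Ioi, hMX]
    exact lt_ciSup_iff (Set.Finite.bddAbove (Set.finite_range _))
  have htailXt : ∀ t : ℝ, {ω | t < MXt ω} = ⋃ i, Xt i ⁻¹' Set.Ioi t := by
    intro t; ext ω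
    simp only [Set.mem_setOf_eq, Set.mem_iUnion, Set.mem_preimage, Set.mem_Ioi, hMXt]
    exact lt_ciSup_iff (Set.Finite.bddAbove (Set.finite_range _))
  have hkey : ∀ t : ℝ, ℙ {ω | t < MXt ω} ≤ 2 * ℙ {ω | t < MX ω} := by
    intro t
    set s : ℝ := ∑ i, (ℙ (X i ⁻¹' Set.Ioi t)).toReal with hsdef
    have hsnn : 0 ≤ s := Finset.sum_nonneg fun i _ => ENNReal.toReal_nonneg
    have hA : s / (1 + s) ≤ (ℙ {ω | t < MX ω}).toReal := by
      rw [htailX t]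
      exact key_union_bound _ (fun i => (hXmeas i) measurableSet_Ioi)
        (fun i j hij => (hpair i j hij).measure_inter_preimage_eq_mul _ _
          measurableSet_Ioi measurableSet_Ioi)
    have hBs : (ℙ {ω | t < MXt ω}).toReal ≤ s := by
      rw [htailXt t]
      have h1 : ℙ (⋃ i, Xt i ⁻¹' Set.Ioi t) ≤ ∑ i, ℙ (Xt i ⁻¹' Set.Ioi t) := by
        refine (measure_iUnion_le _).trans ?_
        rw [tsum_fintype]
      refine le_trans (ENNReal.toReal_mono ?_ h1) ?_
      · exact (ENNReal.sum_lt_top.2 fun i _ => measure_lt_top _ _).ne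
      · rw [ENNReal.toReal_sum fun i _ => measure_ne_top _ _]
        refine le_of_eq (Finset.sum_congr rfl fun i _ => ?_)
        rw [(hident i).measure_mem_eq measurableSet_Ioi]
    have hB1 : (ℙ {ω | t < MXt ω}).toReal ≤ 1 := by
      have := prob_le_one (μ := (ℙ : Measure Ω)) (s := {ω | t < MXt ω})
      simpa using ENNReal.toReal_mono (by norm_num) this
    have hreal : (ℙ {ω | t < MXt ω}).toReal ≤ 2 * (ℙ {ω | t < MX ω}).toReal := by
      have h1s : (0:ℝ) < 1 + s := by positivity
      have hsa : s ≤ (ℙ {ω | t < MX ω}).toReal * (1 + s) := (div_le_iff₀ h1s).1 hA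
      nlinarith [mul_le_mul_of_nonneg_right hB1 hsnn, hsa, h1s, hBs]
    have h2top : (2 : ENNReal) * ℙ {ω | t < MX ω} ≠ ⊤ :=
      ENNReal.mul_ne_top (by norm_num) (measure_ne_top _ _)
    rw [← ENNReal.toReal_le_toReal (measure_ne_top _ _) h2top]
    rwa [ENNReal.toReal_mul, ENNReal.toReal_ofNat]
  have hLX := lintegral_eq_lintegral_meas_lt ℙ (Filter.Eventually.of_forall hMXnn)
    hMXmeas.aemeasurable
  have hLXt := lintegral_eq_lintegral_meas_lt ℙ hMXtnn hMXtmeas.aemeasurable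
  have hle : ∫⁻ ω, ENNReal.ofReal (MXt ω) ≤ 2 * ∫⁻ ω, ENNReal.ofReal (MX ω) := by
    rw [hLX, hLXt]
    calc ∫⁻ t in Set.Ioi 0, ℙ {ω | t < MXt ω}
        ≤ ∫⁻ t in Set.Ioi 0, 2 * ℙ {ω | t < MX ω} := lintegral_mono fun t => hkey t
      _ = 2 * ∫⁻ t in Set.Ioi 0, ℙ {ω | t < MX ω} := lintegral_const_mul' _ _ (by norm_num)
  have hIX : ∫ ω, MX ω = (∫⁻ ω, ENNReal.ofReal (MX ω)).toReal :=
    integral_eq_lintegral_of_nonneg_ae (Filter.Eventually.of_forall hMXnn)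
      hMXmeas.aestronglyMeasurable
  have hIXt : ∫ ω, MXt ω = (∫⁻ ω, ENNReal.ofReal (MXt ω)).toReal :=
    integral_eq_lintegral_of_nonneg_ae hMXtnn hMXtmeas.aestronglyMeasurable
  have hfinX : (∫⁻ ω, ENNReal.ofReal (MX ω)) ≠ ⊤ := hMXint.lintegral_lt_top.ne
  have hmono := ENNReal.toReal_mono (ENNReal.mul_ne_top (by norm_num) hfinX) hle
  rw [ENNReal.toReal_mul, ENNReal.toReal_ofNat] at hmono
  rw [ge_iff_le, hIX, hIXt]
  linarith
end

section
/- Let X_1,...,X_n be nonnegative integrable random variables satisfying P(X_i > t, X_j > t) ≤ P(X_i > t) · P(X_j > t) for all i ≠ j and all t > 0, and let X̃_1,...,X̃_n be mutually independent random variables with X̃_i distributed identically to X_i for each i. Then E[max_{i∈[n]} X_i] ≥ (1/2) · E[max_{i∈[n]} X̃_i]. -/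
open MeasureTheory ProbabilityTheory
open scoped ENNReal NNReal

private lemma aux_ind_mul {Ω : Type*} (A B : Set Ω) (ω : Ω) :
    (A.indicator (1 : Ω → ℝ)) ω * (B.indicator (1 : Ω → ℝ)) ω
      = ((A ∩ B).indicator (1 : Ω → ℝ)) ω := by
  by_cases hA : ω ∈ A <;> by_cases hB : ω ∈ B <;>
    simp [Set.indicator_of_mem, Set.indicator_of_notMem, hA, hB, Set.mem_inter_iff]

/-- Chung–Erdős type second moment bound. -/
private lemma aux_union_lb {Ω : Type*} [MeasureSpace Ω] [IsProbabilityMeasure (ℙ : Measure Ω)]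
    {n : ℕ} (A : Fin n → Set Ω) (hA : ∀ i, MeasurableSet (A i))
    (hpair : ∀ i j, i ≠ j → ℙ (A i ∩ A j) ≤ ℙ (A i) * ℙ (A j)) :
    (∑ i, (ℙ (A i)).toReal) / (1 + ∑ i, (ℙ (A i)).toReal) ≤ (ℙ (⋃ i, A i)).toReal := by
  set p : Fin n → ℝ := fun i => (ℙ (A i)).toReal with hp
  have hpnn : ∀ i, 0 ≤ p i := fun i => ENNReal.toReal_nonneg
  set s : ℝ := ∑ i, p i with hs
  have hsnn : 0 ≤ s := Finset.sum_nonneg fun i _ => hpnn i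
  have hspos : (0:ℝ) < 1 + s := by linarith
  set a : ℝ := 1 / (1 + s) with ha
  set f : Ω → ℝ := fun ω => ∑ i, (A i).indicator (1 : Ω → ℝ) ω with hf
  have hindint : ∀ (B : Set Ω), MeasurableSet B → Integrable ((B).indicator (1 : Ω → ℝ)) ℙ :=
    fun B hB => (integrable_const (1:ℝ)).indicator hB
  have hfint : Integrable f ℙ := integrable_finset_sum _ fun i _ => hindint _ (hA i)
  have hfval : ∫ ω, f ω = s := by
    rw [hf, integral_finset_sum _ fun i _ => hindint _ (hA i)]
    exact Finset.sum_congr rfl fun i _ => integral_indicator_one (hA i)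
  have hf2eq : ∀ ω, f ω ^ 2 = ∑ i, ∑ j, ((A i ∩ A j).indicator (1 : Ω → ℝ)) ω := by
    intro ω
    rw [sq, hf, Finset.sum_mul_sum]
    exact Finset.sum_congr rfl fun i _ => Finset.sum_congr rfl fun j _ => aux_ind_mul _ _ ω
  have hf2int : Integrable (fun ω => f ω ^ 2) ℙ := by
    have : (fun ω => f ω ^ 2) = fun ω => ∑ i, ∑ j, ((A i ∩ A j).indicator (1 : Ω → ℝ)) ω := by
      ext ω; exact hf2eq ω
    rw [this]
    exact integrable_finset_sum _ fun i _ =>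
      integrable_finset_sum _ fun j _ => hindint _ ((hA i).inter (hA j))
  have hf2val : ∫ ω, f ω ^ 2 ≤ s + s * s := by
    have h1 : ∫ ω, f ω ^ 2 = ∑ i, ∑ j, (ℙ (A i ∩ A j)).toReal := by
      simp_rw [hf2eq]
      rw [integral_finset_sum _ fun i _ =>
        integrable_finset_sum _ fun j _ => hindint _ ((hA i).inter (hA j))]
      refine Finset.sum_congr rfl fun i _ => ?_
      rw [integral_finset_sum _ fun j _ => hindint _ ((hA i).inter (hA j))]
      exact Finset.sum_congr rfl fun j _ => integral_indicator_one ((hA i).inter (hA j))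
    rw [h1]
    have h2 : ∀ i j : Fin n, (ℙ (A i ∩ A j)).toReal
        ≤ (if i = j then p i else 0) + p i * p j := by
      intro i j
      by_cases hij : i = j
      · subst hij
        rw [if_pos rfl, Set.inter_self]
        nlinarith [hpnn i]
      · rw [if_neg hij, zero_add]
        have := hpair i j hij
        have h3 : (ℙ (A i ∩ A j)).toReal ≤ (ℙ (A i) * ℙ (A j)).toReal :=
          ENNReal.toReal_mono (ENNReal.mul_ne_top (measure_ne_top _ _) (measure_ne_top _ _)) this
        rwa [ENNReal.toReal_mul] at h3
    calc ∑ i, ∑ j, (ℙ (A i ∩ A j)).toReal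
        ≤ ∑ i, ∑ j, ((if i = j then p i else 0) + p i * p j) :=
          Finset.sum_le_sum fun i _ => Finset.sum_le_sum fun j _ => h2 i j
      _ = s + s * s := by
          simp_rw [Finset.sum_add_distrib, Finset.sum_ite_eq (Finset.univ) _ (fun _ => p _),
            Finset.mem_univ, if_pos, ← Finset.mul_sum, ← hs, ← Finset.sum_mul]
          rw [← hs]
  have hU : MeasurableSet (⋃ i, A i) := MeasurableSet.iUnion fun i => hA i
  have hpt : ∀ ω, 2 * a * f ω - a ^ 2 * f ω ^ 2 ≤ (⋃ i, A i).indicator (1 : Ω → ℝ) ω := by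
    intro ω
    by_cases hω : ω ∈ ⋃ i, A i
    · rw [Set.indicator_of_mem hω]
      have := sq_nonneg (a * f ω - 1)
      simp only [Pi.one_apply]
      nlinarith
    · rw [Set.indicator_of_notMem hω]
      have hzero : f ω = 0 := by
        rw [hf]
        refine Finset.sum_eq_zero fun i _ => ?_
        exact Set.indicator_of_notMem (fun h => hω (Set.mem_iUnion.mpr ⟨i, h⟩)) _
      rw [hzero]; ring_nf; exact le_refl 0
  have hlhsint : Integrable (fun ω => 2 * a * f ω - a ^ 2 * f ω ^ 2) ℙ :=
    ((hfint.const_mul _).sub (hf2int.const_mul _))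
  have hmono : ∫ ω, (2 * a * f ω - a ^ 2 * f ω ^ 2) ≤ ∫ ω, (⋃ i, A i).indicator (1 : Ω → ℝ) ω :=
    integral_mono hlhsint (hindint _ hU) hpt
  rw [integral_indicator_one hU] at hmono
  have hcomp : ∫ ω, (2 * a * f ω - a ^ 2 * f ω ^ 2)
      = 2 * a * s - a ^ 2 * ∫ ω, f ω ^ 2 := by
    rw [integral_sub (hfint.const_mul _) (hf2int.const_mul _), integral_const_mul,
      integral_const_mul, hfval]
  rw [hcomp] at hmono
  have ha2 : (0:ℝ) ≤ a ^ 2 := sq_nonneg a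
  have hstep : 2 * a * s - a ^ 2 * (s + s * s) ≤ 2 * a * s - a ^ 2 * ∫ ω, f ω ^ 2 := by
    nlinarith [hf2val]
  have heq : 2 * a * s - a ^ 2 * (s + s * s) = s / (1 + s) := by
    rw [ha]; field_simp; ring
  rw [measureReal_def] at hmono
  linarith

/-- **Decoupling from below under pairwise negative upper orthant dependence at equal
levels.** For nonnegative integrable random variables `X i` satisfying
`P(X i > t, X j > t) ≤ P(X i > t) · P(X j > t)` for all `i ≠ j` and `t > 0`, and mutually
independent `Xt i` with `Xt i` distributed as `X i`, one has
`E[max_i X i] ≥ (1/2) · E[max_i Xt i]`. -/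
theorem stmt_5
    {Ω : Type*} [MeasureSpace Ω] [IsProbabilityMeasure (ℙ : Measure Ω)]
    (n : ℕ) (X Xt : Fin n → Ω → ℝ)
    (hXnn : ∀ i ω, 0 ≤ X i ω)
    (hXmeas : ∀ i, Measurable (X i))
    (hXtmeas : ∀ i, Measurable (Xt i))
    (hXint : ∀ i, Integrable (X i))
    (hnuod : ∀ i j, i ≠ j → ∀ t : ℝ, 0 < t →
      ℙ {ω | t < X i ω ∧ t < X j ω} ≤ ℙ {ω | t < X i ω} * ℙ {ω | t < X j ω})
    (hident : ∀ i, IdentDistrib (Xt i) (X i) ℙ ℙ)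
    (hindep : iIndepFun (m := fun _ => Real.measurableSpace) Xt ℙ) :
    (∫ ω, ⨆ i, X i ω) ≥ (1 / 2) * ∫ ω, ⨆ i, Xt i ω := by
  rcases Nat.eq_zero_or_pos n with hn | hn
  · subst hn
    simp [Real.iSup_of_isEmpty]
  haveI hne : Nonempty (Fin n) := Fin.pos_iff_nonempty.mp hn
  set M : Ω → ℝ := fun ω => ⨆ i, X i ω with hMdef
  set Mt : Ω → ℝ := fun ω => ⨆ i, Xt i ω with hMtdef
  have hbX : ∀ ω, BddAbove (Set.range fun i => X i ω) :=
    fun ω => (Set.finite_range _).bddAbove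
  have hbXt : ∀ ω, BddAbove (Set.range fun i => Xt i ω) :=
    fun ω => (Set.finite_range _).bddAbove
  -- measurability of the sups
  have hMmeas : Measurable M := by
    have h2 : M = Finset.univ.sup' Finset.univ_nonempty X := by
      ext ω
      rw [Finset.sup'_apply, Finset.sup'_univ_eq_ciSup]
    rw [h2]
    exact Finset.measurable_sup' Finset.univ_nonempty (fun i _ => hXmeas i)
  have hMtmeas : Measurable Mt := by
    have h2 : Mt = Finset.univ.sup' Finset.univ_nonempty Xt := by
      ext ω
      rw [Finset.sup'_apply, Finset.sup'_univ_eq_ciSup]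
    rw [h2]
    exact Finset.measurable_sup' Finset.univ_nonempty (fun i _ => hXtmeas i)
  -- nonnegativity and bounds
  have hMnn : ∀ ω, 0 ≤ M ω :=
    fun ω => (hXnn (Classical.arbitrary _) ω).trans (le_ciSup (hbX ω) _)
  have hMle : ∀ ω, M ω ≤ ∑ i, X i ω := fun ω =>
    ciSup_le fun i => Finset.single_le_sum (fun j _ => hXnn j ω) (Finset.mem_univ i)
  have hMint : Integrable M ℙ := by
    refine (integrable_finset_sum Finset.univ fun i (_ : i ∈ Finset.univ) => hXint i).mono
      hMmeas.aestronglyMeasurable ?_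
    filter_upwards with ω
    rw [Real.norm_eq_abs, Real.norm_eq_abs, abs_of_nonneg (hMnn ω),
      abs_of_nonneg (Finset.sum_nonneg fun j _ => hXnn j ω)]
    exact hMle ω
  -- Xt side
  have hXtint : ∀ i, Integrable (Xt i) ℙ := fun i => (hident i).integrable_iff.mpr (hXint i)
  have hXtnn : ∀ᵐ ω ∂ℙ, ∀ i, 0 ≤ Xt i ω := by
    rw [ae_all_iff]
    intro i
    rw [ae_iff]
    have hset : {ω | ¬ 0 ≤ Xt i ω} = Xt i ⁻¹' (Set.Iio 0) := by
      ext ω; simp [not_le]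
    rw [hset, (hident i).measure_mem_eq measurableSet_Iio]
    have : X i ⁻¹' (Set.Iio 0) = ∅ := by
      ext ω; simp [not_lt.mpr (hXnn i ω)]
    rw [this]; simp
  have hMtnn : ∀ᵐ ω ∂ℙ, 0 ≤ Mt ω := by
    filter_upwards [hXtnn] with ω h
    exact (h (Classical.arbitrary _)).trans (le_ciSup (hbXt ω) _)
  have hMtint : Integrable Mt ℙ := by
    refine (integrable_finset_sum Finset.univ fun i (_ : i ∈ Finset.univ) => hXtint i).mono
      hMtmeas.aestronglyMeasurable ?_
    filter_upwards [hXtnn] with ω h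
    rw [Real.norm_eq_abs, Real.norm_eq_abs,
      abs_of_nonneg ((h (Classical.arbitrary _)).trans (le_ciSup (hbXt ω) _)),
      abs_of_nonneg (Finset.sum_nonneg fun j _ => h j)]
    exact ciSup_le fun i => Finset.single_le_sum (fun j _ => h j) (Finset.mem_univ i)
  -- key pointwise bound
  have hkey : ∀ t ∈ Set.Ioi (0:ℝ), ℙ {a | t < Mt a} ≤ 2 * ℙ {a | t < M a} := by
    intro t ht
    rw [Set.mem_Ioi] at ht
    have hsetM : {a | t < M a} = ⋃ i, {ω | t < X i ω} := by
      ext ω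
      simp only [Set.mem_setOf_eq, Set.mem_iUnion, hMdef]
      exact lt_ciSup_iff (hbX ω)
    have hsetMt : {a | t < Mt a} = ⋃ i, {ω | t < Xt i ω} := by
      ext ω
      simp only [Set.mem_setOf_eq, Set.mem_iUnion, hMtdef]
      exact lt_ciSup_iff (hbXt ω)
    set A : Fin n → Set Ω := fun i => {ω | t < X i ω} with hA
    have hAmeas : ∀ i, MeasurableSet (A i) := fun i => hXmeas i measurableSet_Ioi
    have hpair : ∀ i j, i ≠ j → ℙ (A i ∩ A j) ≤ ℙ (A i) * ℙ (A j) := by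
      intro i j hij
      have h1 : A i ∩ A j = {ω | t < X i ω ∧ t < X j ω} := by
        ext ω; simp [hA, Set.mem_inter_iff]
      rw [h1]
      exact hnuod i j hij t ht
    have hlb := aux_union_lb A hAmeas hpair
    set s : ℝ := ∑ i, (ℙ (A i)).toReal with hs
    have hsnn : 0 ≤ s := Finset.sum_nonneg fun i _ => ENNReal.toReal_nonneg
    have hspos : (0:ℝ) < 1 + s := by linarith
    set P : ℝ := (ℙ (⋃ i, A i)).toReal with hPdef
    -- upper bound for the independent-side probability
    have hmeast : ℙ (⋃ i, {ω | t < Xt i ω}) ≤ ∑ i, ℙ (A i) := by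
      refine (measure_iUnion_fintype_le _ _).trans ?_
      refine Finset.sum_le_sum fun i _ => ?_
      have h2 : {ω | t < Xt i ω} = Xt i ⁻¹' (Set.Ioi t) := rfl
      have h3 : A i = X i ⁻¹' (Set.Ioi t) := rfl
      rw [h2, h3, (hident i).measure_mem_eq measurableSet_Ioi]
    set q : ℝ := (ℙ (⋃ i, {ω | t < Xt i ω})).toReal with hq
    have hq1 : q ≤ 1 := by
      have := prob_le_one (μ := (ℙ : Measure Ω)) (s := ⋃ i, {ω | t < Xt i ω})
      have h4 := ENNReal.toReal_mono ENNReal.one_ne_top this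
      simpa using h4
    have hqs : q ≤ s := by
      have h4 := ENNReal.toReal_mono
        (by exact ENNReal.sum_ne_top.mpr fun i _ => measure_ne_top _ _) hmeast
      rwa [ENNReal.toReal_sum fun i _ => measure_ne_top _ _] at h4
    have hq2 : q ≤ 2 * P := by
      rcases le_total s 1 with h | h
      · have h2 : s ≤ 2 * (s / (1 + s)) := by
          rw [mul_div_assoc']
          rw [le_div_iff₀ hspos]
          nlinarith
        linarith
      · have h2 : 1 ≤ 2 * (s / (1 + s)) := by
          rw [mul_div_assoc']
          rw [le_div_iff₀ hspos]
          linarith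
        linarith
    rw [hsetM, hsetMt]
    calc ℙ (⋃ i, {ω | t < Xt i ω}) = ENNReal.ofReal q :=
          (ENNReal.ofReal_toReal (measure_ne_top _ _)).symm
      _ ≤ ENNReal.ofReal (2 * P) := ENNReal.ofReal_le_ofReal hq2
      _ = 2 * ℙ (⋃ i, A i) := by
          rw [ENNReal.ofReal_mul (by norm_num : (0:ℝ) ≤ 2), hPdef,
            ENNReal.ofReal_toReal (measure_ne_top _ _), ENNReal.ofReal_ofNat]
  -- layer cake
  have hL1 : ∫⁻ ω, ENNReal.ofReal (M ω) = ∫⁻ t in Set.Ioi 0, ℙ {a | t < M a} :=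
    lintegral_eq_lintegral_meas_lt ℙ (ae_of_all _ hMnn) hMmeas.aemeasurable
  have hL2 : ∫⁻ ω, ENNReal.ofReal (Mt ω) = ∫⁻ t in Set.Ioi 0, ℙ {a | t < Mt a} :=
    lintegral_eq_lintegral_meas_lt ℙ hMtnn hMtmeas.aemeasurable
  have hfinM : ∫⁻ ω, ENNReal.ofReal (M ω) ∂ℙ ≠ ⊤ := by
    have heq : ∀ ω, ENNReal.ofReal (M ω) = ‖M ω‖ₑ :=
      fun ω => (Real.enorm_eq_ofReal (hMnn ω)).symm
    simp_rw [heq]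
    exact hMint.hasFiniteIntegral.ne
  have hmono : ∫⁻ t in Set.Ioi (0:ℝ), ℙ {a | t < Mt a}
      ≤ 2 * ∫⁻ t in Set.Ioi (0:ℝ), ℙ {a | t < M a} := by
    refine (setLIntegral_mono' measurableSet_Ioi hkey).trans_eq ?_
    exact lintegral_const_mul' 2 _ (by norm_num)
  have hchain : ∫⁻ ω, ENNReal.ofReal (Mt ω) ≤ 2 * ∫⁻ ω, ENNReal.ofReal (M ω) := by
    rw [hL1, hL2]; exact hmono
  have hIM : ∫ ω, M ω = (∫⁻ ω, ENNReal.ofReal (M ω)).toReal :=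
    integral_eq_lintegral_of_nonneg_ae (ae_of_all _ hMnn) hMmeas.aestronglyMeasurable
  have hIMt : ∫ ω, Mt ω = (∫⁻ ω, ENNReal.ofReal (Mt ω)).toReal :=
    integral_eq_lintegral_of_nonneg_ae hMtnn hMtmeas.aestronglyMeasurable
  have hfin2 : (2 : ℝ≥0∞) * ∫⁻ ω, ENNReal.ofReal (M ω) ≠ ⊤ :=
    ENNReal.mul_ne_top (by norm_num) hfinM
  have hto := ENNReal.toReal_mono hfin2 hchain
  rw [ENNReal.toReal_mul, ENNReal.toReal_ofNat] at hto
  rw [ge_iff_le]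
  have hfinal : ∫ ω, Mt ω ≤ 2 * ∫ ω, M ω := by
    rw [hIM, hIMt]; exact hto
  show 1 / 2 * ∫ ω, Mt ω ≤ ∫ ω, M ω
  linarith
end

section
/- For p_1,...,p_n ∈ [0,1], setting S = Σ_{i=1}^n p_i and P = ∏_{i=1}^n (1 − p_i), the quantity F := 2S² − (S + S²)(1 − P) is nonnegative. -/
lemma weierstrass_aux {ι : Type*} (s : Finset ι) (p : ι → ℝ)
    (hp : ∀ i ∈ s, 0 ≤ p i ∧ p i ≤ 1) :
    1 - ∑ i ∈ s, p i ≤ ∏ i ∈ s, (1 - p i) := by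
  induction s using Finset.cons_induction with
  | empty => simp
  | cons a s ha ih =>
    have hpa := hp a (Finset.mem_cons_self a s)
    have hrest : ∀ i ∈ s, 0 ≤ p i ∧ p i ≤ 1 := fun i hi => hp i (Finset.mem_cons_of_mem hi)
    have ih' := ih hrest
    have hprod : (0:ℝ) ≤ ∏ i ∈ s, (1 - p i) :=
      Finset.prod_nonneg fun i hi => by linarith [(hrest i hi).2]
    rw [Finset.sum_cons, Finset.prod_cons]
    have hsum : (0:ℝ) ≤ ∑ i ∈ s, p i := Finset.sum_nonneg fun i hi => (hrest i hi).1
    nlinarith [mul_nonneg (by linarith [hpa.2] : (0:ℝ) ≤ 1 - p a)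
      (by linarith : (0:ℝ) ≤ ∏ i ∈ s, (1 - p i) - (1 - ∑ i ∈ s, p i)),
      mul_nonneg hpa.1 hsum]

/-- For `p 1, ..., p n ∈ [0,1]`, with `S = ∑ i, p i` and `P = ∏ i, (1 - p i)`, the quantity
`F = 2S² - (S + S²)(1 - P)` is nonnegative. -/
theorem stmt_10 (n : ℕ) (p : Fin n → ℝ) (hp : ∀ i, p i ∈ Set.Icc (0 : ℝ) 1)
    (S P : ℝ) (hS : S = ∑ i, p i) (hP : P = ∏ i, (1 - p i)) :
    0 ≤ 2 * S ^ 2 - (S + S ^ 2) * (1 - P) := by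
  have hS0 : 0 ≤ S := hS ▸ Finset.sum_nonneg fun i _ => (hp i).1
  have hP0 : 0 ≤ P := hP ▸ Finset.prod_nonneg fun i _ => by linarith [(hp i).2]
  have hW : 1 - S ≤ P := by
    rw [hS, hP]; exact weierstrass_aux _ _ fun i _ => ⟨(hp i).1, (hp i).2⟩
  rcases le_total S 1 with h | h
  · nlinarith
  · nlinarith
end
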